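/- arXiv:1701.06262 — 4 statements merged into one kernel-verified Lean document; each statement's English description precedes it below -/
import Mathlib

section
/- Let R be the n²×n² matrix on V ⊗ V (V of dimension n) given by R = Σ_{i<j} t² E_{j,i}⊗E_{i,j} + Σ_{i<j} E_{i,j}⊗E_{j,i} + (v^{-1} - v)t Σ_{i<j} E_{j,j}⊗E_{i,i} + v^{-1}t Σ_i E_{i,i}⊗E_{i,i}. Then R satisfies the quadratic Hecke relation (R - v^{-1}t·Id)(R + vt·Id) = 0 on V ⊗ V. -/
set_option maxRecDepth 8000
set_option maxHeartbeats 1000000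

open Matrix Kronecker

/-- The matrix unit `E_{a,b}`. -/
noncomputable def Eu (K : Type*) [Field K] (n : ℕ) (a b : Fin n) : Matrix (Fin n) (Fin n) K :=
  Matrix.single a b 1

/-- The modified R-matrix
`R = Σ_{i<j} t² E_{j,i}⊗E_{i,j} + Σ_{i<j} E_{i,j}⊗E_{j,i} + (v⁻¹-v)t Σ_{i<j} E_{j,j}⊗E_{i,i}
  + v⁻¹t Σ_i E_{i,i}⊗E_{i,i}` on `V ⊗ V`. -/
noncomputable def Rmat5 (K : Type*) [Field K] (v t : K) (n : ℕ) :
    Matrix (Fin n × Fin n) (Fin n × Fin n) K :=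
  (∑ i : Fin n, ∑ j : Fin n, if i < j then (t ^ 2) • (Eu K n j i ⊗ₖ Eu K n i j) else 0) +
  (∑ i : Fin n, ∑ j : Fin n, if i < j then Eu K n i j ⊗ₖ Eu K n j i else 0) +
  (∑ i : Fin n, ∑ j : Fin n, if i < j then ((v⁻¹ - v) * t) • (Eu K n j j ⊗ₖ Eu K n i i) else 0) +
  (v⁻¹ * t) • ∑ i : Fin n, Eu K n i i ⊗ₖ Eu K n i i

lemma iteApp {I K : Type*} (p : Prop) [Decidable p] (M N : Matrix I I K) (x y : I) :
    (if p then M else N) x y = if p then M x y else N x y := by split <;> rfl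

noncomputable def Af {K : Type*} [Field K] {n : ℕ} (t : K) (a b : Fin n) : K :=
  (if b < a then t ^ 2 else 0) + (if a < b then 1 else 0)

noncomputable def Bf {K : Type*} [Field K] {n : ℕ} (v t : K) (a b : Fin n) : K :=
  (if b < a then (v⁻¹ - v) * t else 0) + (if a = b then v⁻¹ * t else 0)

lemma sumApply1 (K : Type*) [Field K] (t : K) (n : ℕ) (a b c d : Fin n) :
    (∑ i : Fin n, ∑ j : Fin n,
      if i < j then (t ^ 2) • (Eu K n j i ⊗ₖ Eu K n i j) else 0) (a,b) (c,d)
      = if c = b ∧ d = a ∧ b < a then t ^ 2 else 0 := by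
  simp only [Matrix.sum_apply, Eu, iteApp, Matrix.smul_apply, smul_eq_mul,
    Matrix.zero_apply, Matrix.kroneckerMap_apply, Matrix.single, Matrix.of_apply,
    mul_ite, mul_one, mul_zero]
  rw [Finset.sum_eq_single b (fun x _ hx => by simp [hx]) (by simp)]
  rw [Finset.sum_eq_single a (fun x _ hx => by simp [hx]) (by simp)]
  by_cases h1 : c = b <;> by_cases h2 : d = a <;> by_cases h3 : b < a <;> simp_all [eq_comm]

lemma sumApply2 (K : Type*) [Field K] (n : ℕ) (a b c d : Fin n) :
    (∑ i : Fin n, ∑ j : Fin n,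
      if i < j then Eu K n i j ⊗ₖ Eu K n j i else 0) (a,b) (c,d)
      = if c = b ∧ d = a ∧ a < b then 1 else 0 := by
  simp only [Matrix.sum_apply, Eu, iteApp,
    Matrix.zero_apply, Matrix.kroneckerMap_apply, Matrix.single, Matrix.of_apply,
    mul_ite, mul_one, mul_zero]
  rw [Finset.sum_eq_single a (fun x _ hx => by simp [hx]) (by simp)]
  rw [Finset.sum_eq_single b (fun x _ hx => by simp [hx]) (by simp)]
  by_cases h1 : c = b <;> by_cases h2 : d = a <;> by_cases h3 : a < b <;> simp_all [eq_comm]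

lemma sumApply3 (K : Type*) [Field K] (v t : K) (n : ℕ) (a b c d : Fin n) :
    (∑ i : Fin n, ∑ j : Fin n,
      if i < j then ((v⁻¹ - v) * t) • (Eu K n j j ⊗ₖ Eu K n i i) else 0) (a,b) (c,d)
      = if c = a ∧ d = b ∧ b < a then (v⁻¹ - v) * t else 0 := by
  simp only [Matrix.sum_apply, Eu, iteApp, Matrix.smul_apply, smul_eq_mul,
    Matrix.zero_apply, Matrix.kroneckerMap_apply, Matrix.single, Matrix.of_apply,
    mul_ite, mul_one, mul_zero]
  rw [Finset.sum_eq_single b (fun x _ hx => by simp [hx]) (by simp)]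
  rw [Finset.sum_eq_single a (fun x _ hx => by simp [hx]) (by simp)]
  by_cases h1 : c = a <;> by_cases h2 : d = b <;> by_cases h3 : b < a <;> simp_all [eq_comm]

lemma sumApply4 (K : Type*) [Field K] (v t : K) (n : ℕ) (a b c d : Fin n) :
    ((v⁻¹ * t) • ∑ i : Fin n, Eu K n i i ⊗ₖ Eu K n i i) (a,b) (c,d)
      = if c = a ∧ d = b ∧ a = b then v⁻¹ * t else 0 := by
  simp only [Matrix.smul_apply, Matrix.sum_apply, Eu, smul_eq_mul,
    Matrix.kroneckerMap_apply, Matrix.single, Matrix.of_apply,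
    mul_ite, mul_one, mul_zero, Finset.mul_sum]
  rw [Finset.sum_eq_single a (fun x _ hx => by simp [hx]) (by simp)]
  by_cases h1 : c = a <;> by_cases h2 : d = b <;> by_cases h3 : a = b <;> simp_all [eq_comm]

lemma Rmat5_apply (K : Type*) [Field K] (v t : K) (n : ℕ) (a b c d : Fin n) :
    Rmat5 K v t n (a, b) (c, d) =
      (if c = b ∧ d = a then Af t a b else 0) + (if c = a ∧ d = b then Bf v t a b else 0) := by
  simp only [Rmat5, Matrix.add_apply, sumApply1, sumApply2, sumApply3, sumApply4, Af, Bf,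
    ite_and]
  split_ifs <;> ring

lemma one_app {I K : Type*} [DecidableEq I] [Zero K] [One K] (x y u w : I) :
    (1 : Matrix (I × I) (I × I) K) (x, y) (u, w) = if u = x ∧ w = y then 1 else 0 := by
  rw [Matrix.one_apply, if_congr (Iff.trans Prod.ext_iff (and_congr eq_comm eq_comm)) rfl rfl]

lemma sum_pair {M : Type*} [AddCommMonoid M] {n : ℕ} (p q : Fin n) (F : Fin n → Fin n → M) :
    (∑ c : Fin n, ∑ d : Fin n, if c = p ∧ d = q then F c d else 0) = F p q := by
  rw [Finset.sum_eq_single p (fun x _ hx => by simp [hx]) (by simp)]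
  simp

/-- The quadratic Hecke relation `(R - v⁻¹t·Id)(R + vt·Id) = 0`. -/
theorem stmt5 (K : Type*) [Field K] (v t : K) (hv : v ≠ 0) (ht : t ≠ 0) (n : ℕ) :
    (Rmat5 K v t n - (v⁻¹ * t) • (1 : Matrix (Fin n × Fin n) (Fin n × Fin n) K)) *
      (Rmat5 K v t n + (v * t) • (1 : Matrix (Fin n × Fin n) (Fin n × Fin n) K)) = 0 := by
  ext ⟨a, b⟩ ⟨e, f⟩
  rw [Matrix.mul_apply, Fintype.sum_prod_type]
  have key : ∀ c d : Fin n,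
      (Rmat5 K v t n - (v⁻¹ * t) • (1 : Matrix (Fin n × Fin n) (Fin n × Fin n) K)) (a,b) (c,d) *
      (Rmat5 K v t n + (v * t) • (1 : Matrix (Fin n × Fin n) (Fin n × Fin n) K)) (c,d) (e,f)
      = (if c = b ∧ d = a then (Af t a b) *
            ((if e = d ∧ f = c then Af t c d else 0) +
             (if e = c ∧ f = d then Bf v t c d + v * t else 0)) else 0)
      + (if c = a ∧ d = b then (Bf v t a b - v⁻¹ * t) *
            ((if e = d ∧ f = c then Af t c d else 0) +
             (if e = c ∧ f = d then Bf v t c d + v * t else 0)) else 0) := by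
    intro c d
    rw [Matrix.sub_apply, Matrix.add_apply, Matrix.smul_apply, Matrix.smul_apply,
      Rmat5_apply, Rmat5_apply]
    simp only [one_app, smul_eq_mul, ite_and]
    split_ifs <;> ring
  simp only [key, Finset.sum_add_distrib, sum_pair]
  have hvv : v⁻¹ * v = 1 := inv_mul_cancel₀ hv
  rcases lt_trichotomy a b with h | h | h
  · simp only [Af, Bf, if_pos h, if_neg (asymm h), if_neg h.ne, if_neg h.ne']
    split_ifs <;> simp <;> field_simp <;> ring
  · subst h
    simp [Af, Bf, lt_irrefl]
  · simp only [Af, Bf, if_pos h, if_neg (asymm h), if_neg h.ne, if_neg h.ne']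
    split_ifs <;> simp <;> field_simp <;> ring
end

section
/- Define rational functions with values in H_k(v,t) by T_i(x,y) = t^{-1} T_i + (v^{-1} - v)x/(y - x). Then the functional braid relation holds: T_i(x,y) T_{i+1}(x,z) T_i(y,z) = T_{i+1}(y,z) T_i(x,z) T_{i+1}(x,y), for all i with 1 ≤ i ≤ k-2 and all distinct values x, y, z in ℚ(v,t) (with x ≠ y, x ≠ z, y ≠ z). -/
/-- The rational function `T_i(x,y) = t⁻¹ T_i + (v⁻¹ - v)x/(y - x)` with values in `H_k(v,t)`. -/
noncomputable def Tf {K : Type*} [Field K] {A : Type*} [Ring A] [Algebra K A]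
    (v t : K) (T : ℕ → A) (i : ℕ) (x y : K) : A :=
  t⁻¹ • T i + ((v⁻¹ - v) * x / (y - x)) • (1 : A)

lemma quad_sq {K : Type*} [Field K] {A : Type*} [Ring A] [Algebra K A]
    (v t : K) (a : A) (h : (a - (v⁻¹ * t) • (1 : A)) * (a + (v * t) • (1 : A)) = 0) :
    a * a = ((v⁻¹ - v) * t) • a + (v⁻¹ * t * (v * t)) • (1 : A) := by
  have := h
  simp only [sub_mul, mul_add, smul_mul_assoc, mul_smul_comm, one_mul, mul_one,
    smul_smul, smul_sub] at this
  linear_combination (norm := module) this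

lemma key_braid {K : Type*} [CommRing K] {A : Type*} [Ring A] [Algebra K A]
    (a b : A) (s u w p q r : K)
    (hbr : a * b * a = b * a * b)
    (ha2 : a * a = u • a + w • (1 : A))
    (hb2 : b * b = u • b + w • (1 : A))
    (hsw : s * s * w = 1)
    (hpqr : p * q + q * r + s * u * q = p * r) :
    (s • a + p • (1 : A)) * (s • b + q • (1 : A)) * (s • a + r • (1 : A)) =
      (s • b + r • (1 : A)) * (s • a + q • (1 : A)) * (s • b + p • (1 : A)) := by
  simp only [mul_add, add_mul, smul_mul_assoc, mul_smul_comm, smul_smul, mul_one, one_mul]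
  rw [hbr, ha2, hb2]
  simp only [smul_add, smul_smul]
  match_scalars <;>
    first
    | ring1
    | linear_combination (norm := ring1) s * hpqr
    | linear_combination (norm := ring1) (-s) * hpqr
    | linear_combination (norm := ring1) (2*s) * hpqr
    | linear_combination (norm := ring1) (-2*s) * hpqr
    | linear_combination (norm := ring1) q * hsw
    | linear_combination (norm := ring1) (-q) * hsw

lemma frac_key {K : Type*} [Field K] (c x y z : K)
    (hx : y - x ≠ 0) (hz : z - x ≠ 0) (hw : z - y ≠ 0) :
    (c * x / (y - x)) * (c * x / (z - x)) + (c * x / (z - x)) * (c * y / (z - y)) +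
      c * (c * x / (z - x)) = (c * x / (y - x)) * (c * y / (z - y)) := by
  field_simp
  ring

set_option maxHeartbeats 800000 in
/-- The functional braid relation
`T_i(x,y) T_{i+1}(x,z) T_i(y,z) = T_{i+1}(y,z) T_i(x,z) T_{i+1}(x,y)`. -/
theorem stmt10 {K : Type*} [Field K] {A : Type*} [Ring A] [Algebra K A]
    (v t : K) (hv : v ≠ 0) (ht : t ≠ 0) (k : ℕ) (T : ℕ → A)
    (hbraid : ∀ i, 1 ≤ i → i + 2 ≤ k → T i * T (i + 1) * T i = T (i + 1) * T i * T (i + 1))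
    (hcomm : ∀ i j, 1 ≤ i → 1 ≤ j → i + 1 ≤ k → j + 1 ≤ k → (i + 2 ≤ j ∨ j + 2 ≤ i) →
      T i * T j = T j * T i)
    (hquad : ∀ i, 1 ≤ i → i + 1 ≤ k →
      (T i - (v⁻¹ * t) • (1 : A)) * (T i + (v * t) • (1 : A)) = 0) :
    ∀ i, 1 ≤ i → i + 2 ≤ k → ∀ x y z : K, x ≠ y → x ≠ z → y ≠ z →
      Tf v t T i x y * Tf v t T (i + 1) x z * Tf v t T i y z =
        Tf v t T (i + 1) y z * Tf v t T i x z * Tf v t T (i + 1) x y := by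
  intro i hi hik x y z hxy hxz hyz
  have hx : y - x ≠ 0 := sub_ne_zero.mpr (Ne.symm hxy)
  have hz : z - x ≠ 0 := sub_ne_zero.mpr (Ne.symm hxz)
  have hw : z - y ≠ 0 := sub_ne_zero.mpr (Ne.symm hyz)
  have ha2 : T i * T i = ((v⁻¹ - v) * t) • T i + (v⁻¹ * t * (v * t)) • (1 : A) :=
    quad_sq v t _ (hquad i hi (by omega))
  have hb2 : T (i+1) * T (i+1) =
      ((v⁻¹ - v) * t) • T (i+1) + (v⁻¹ * t * (v * t)) • (1 : A) :=
    quad_sq v t _ (hquad (i + 1) (by omega) (by omega))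
  have hbr : T i * T (i+1) * T i = T (i+1) * T i * T (i+1) := hbraid i hi hik
  have hc : t⁻¹ * ((v⁻¹ - v) * t) = v⁻¹ - v := by
    field_simp
  have hsw : t⁻¹ * t⁻¹ * (v⁻¹ * t * (v * t)) = 1 := by
    field_simp
  have hpqr : ((v⁻¹ - v) * x / (y - x)) * ((v⁻¹ - v) * x / (z - x)) +
      ((v⁻¹ - v) * x / (z - x)) * ((v⁻¹ - v) * y / (z - y)) +
      t⁻¹ * ((v⁻¹ - v) * t) * ((v⁻¹ - v) * x / (z - x)) =
      ((v⁻¹ - v) * x / (y - x)) * ((v⁻¹ - v) * y / (z - y)) := by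
    rw [hc]
    exact frac_key (v⁻¹ - v) x y z hx hz hw
  simp only [Tf]
  exact key_braid (T i) (T (i+1)) t⁻¹ ((v⁻¹ - v) * t) (v⁻¹ * t * (v * t))
    ((v⁻¹ - v) * x / (y - x)) ((v⁻¹ - v) * x / (z - x)) ((v⁻¹ - v) * y / (z - y))
    hbr ha2 hb2 hsw hpqr
end

section
/- With T_i(x,y) = t^{-1} T_i + (v^{-1} - v)x/(y - x) in H_k(v,t), the unitarity relation T_i(x,y) T_i(y,x) = (x - v^{-2}y)(x - v²y)/(x - y)² · 1 holds for all x ≠ y in ℚ(v,t). -/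
/-- The unitarity relation `T_i(x,y) T_i(y,x) = (x - v⁻²y)(x - v²y)/(x - y)² · 1`. -/
theorem stmt11 {K : Type*} [Field K] {A : Type*} [Ring A] [Algebra K A]
    (v t : K) (hv : v ≠ 0) (ht : t ≠ 0) (k : ℕ) (T : ℕ → A)
    (hbraid : ∀ i, 1 ≤ i → i + 2 ≤ k → T i * T (i + 1) * T i = T (i + 1) * T i * T (i + 1))
    (hcomm : ∀ i j, 1 ≤ i → 1 ≤ j → i + 1 ≤ k → j + 1 ≤ k → (i + 2 ≤ j ∨ j + 2 ≤ i) →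
      T i * T j = T j * T i)
    (hquad : ∀ i, 1 ≤ i → i + 1 ≤ k →
      (T i - (v⁻¹ * t) • (1 : A)) * (T i + (v * t) • (1 : A)) = 0) :
    ∀ i, 1 ≤ i → i + 1 ≤ k → ∀ x y : K, x ≠ y →
      Tf v t T i x y * Tf v t T i y x =
        ((x - (v ^ 2)⁻¹ * y) * (x - v ^ 2 * y) / (x - y) ^ 2) • (1 : A) := by
  intro i hi hik x y hxy
  have hq := hquad i hi hik
  have key : T i * T i = (v⁻¹ * t - v * t) • T i + (v⁻¹ * t * (v * t)) • (1 : A) := by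
    have e : (T i - (v⁻¹ * t) • (1 : A)) * (T i + (v * t) • (1 : A)) =
        T i * T i - ((v⁻¹ * t - v * t) • T i + (v⁻¹ * t * (v * t)) • (1 : A)) := by
      simp only [sub_mul, mul_add, smul_mul_assoc, mul_smul_comm, smul_smul, one_mul, mul_one]
      module
    rw [e, sub_eq_zero] at hq
    exact hq
  have hyx : y - x ≠ 0 := sub_ne_zero.2 (Ne.symm hxy)
  have hxy' : x - y ≠ 0 := sub_ne_zero.2 hxy
  unfold Tf
  rw [add_mul, mul_add, mul_add, smul_mul_smul_comm, key, smul_mul_smul_comm,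
    smul_mul_smul_comm, smul_mul_smul_comm]
  simp only [one_mul, mul_one, smul_add, smul_smul]
  match_scalars <;> field_simp <;> ring
end

section
/- With the same R-matrix on V ⊗ V as above, R commutes with Δ(K) = K ⊗ K for K = t^{-1}I + (v-t^{-1})E_{m,m} + (v^{-1}-t^{-1})E_{m+1,m+1}, for every 1 ≤ m ≤ n-1. -/
open Matrix Kronecker

/-- `K_m = t⁻¹ I + (v - t⁻¹) E_{m,m} + (v⁻¹ - t⁻¹) E_{m+1,m+1}` (here `a = m`, `b = m+1`). -/
noncomputable def Kmat (K : Type*) [Field K] (v t : K) (n : ℕ) (a b : Fin n) :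
    Matrix (Fin n) (Fin n) K :=
  t⁻¹ • (1 : Matrix (Fin n) (Fin n) K) + (v - t⁻¹) • Eu K n a a + (v⁻¹ - t⁻¹) • Eu K n b b

/-- The R-matrix of `U_{v,t}(sl_n)` on `V ⊗ V`. -/
noncomputable def Rmat (K : Type*) [Field K] (v t : K) (n : ℕ) :
    Matrix (Fin n × Fin n) (Fin n × Fin n) K :=
  Matrix.of fun p q =>
    if q.2 < q.1 then
      t ^ 2 * (if p = (q.2, q.1) then 1 else 0) + (v⁻¹ - v) * t * (if p = q then 1 else 0)
    else if q.1 = q.2 then v⁻¹ * t * (if p = q then 1 else 0)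
    else if p = (q.2, q.1) then 1 else 0

lemma Kmat_eq_diagonal (K : Type*) [Field K] (v t : K) (n : ℕ) (a b : Fin n) (hab : a ≠ b) :
    Kmat K v t n a b =
      Matrix.diagonal (fun i => if i = a then v else if i = b then v⁻¹ else t⁻¹) := by
  ext i j
  simp only [Kmat, Eu, Matrix.add_apply, Matrix.smul_apply, Matrix.one_apply,
    Matrix.single, Matrix.of_apply, Matrix.diagonal_apply, smul_eq_mul]
  by_cases hij : i = j
  · subst hij
    by_cases ha : i = a
    · subst ha; simp [hab, hab.symm]
    · have ha' : a ≠ i := fun h => ha h.symm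
      by_cases hb : i = b
      · subst hb; simp [hab, ha, ha', Ne.symm hab]
      · have hb' : b ≠ i := fun h => hb h.symm
        simp [ha, hb, ha', hb']
  · have h1 : ¬(a = i ∧ a = j) := by rintro ⟨rfl, rfl⟩; exact hij rfl
    have h2 : ¬(b = i ∧ b = j) := by rintro ⟨rfl, rfl⟩; exact hij rfl
    simp [hij, h1, h2]

/-- The R-matrix commutes with `Δ(K_m) = K_m ⊗ K_m` on `V ⊗ V`. -/
theorem stmt17 (K : Type*) [Field K] (v t : K) (hv : v ≠ 0) (ht : t ≠ 0)
    (n m : ℕ) (hm : m + 1 < n) :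
    Rmat K v t n *
        (Kmat K v t n ⟨m, by omega⟩ ⟨m + 1, hm⟩ ⊗ₖ Kmat K v t n ⟨m, by omega⟩ ⟨m + 1, hm⟩) =
      (Kmat K v t n ⟨m, by omega⟩ ⟨m + 1, hm⟩ ⊗ₖ Kmat K v t n ⟨m, by omega⟩ ⟨m + 1, hm⟩) *
        Rmat K v t n := by
  have hab : (⟨m, by omega⟩ : Fin n) ≠ ⟨m + 1, hm⟩ := by
    simp [Fin.ext_iff]
  set d : Fin n → K := fun i =>
    if i = (⟨m, by omega⟩ : Fin n) then v else if i = (⟨m + 1, hm⟩ : Fin n) then v⁻¹ else t⁻¹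
    with hd
  rw [Kmat_eq_diagonal K v t n _ _ hab, Matrix.diagonal_kronecker_diagonal]
  ext p q
  rw [Matrix.mul_diagonal, Matrix.diagonal_mul]
  by_cases h1 : p = q
  · subst h1; ring
  · by_cases h2 : p = (q.2, q.1)
    · subst h2; simp only [Prod.fst, Prod.snd]; ring
    · have hz : Rmat K v t n p q = 0 := by
        simp only [Rmat, Matrix.of_apply]
        split_ifs <;> simp [h1, h2]
      rw [hz, mul_zero, zero_mul]
end
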